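/- arXiv:2306.04105 — 2 statements merged into one kernel-verified Lean document; each statement's English description precedes it below -/
import Mathlib

section
/- Let X be a connected graph of order at least 3 and let r, s be positive integers with 2 ≤ r ≤ s. Then the Cartesian product K_{r,s} □ X is not well-dominated. -/
/-!
Fix `a₀` on the `r`-side `A` and `b₀` on the `s`-side of `K_{r,s}`. For an independent set `M`
of `X`, the set `D(M) = {a₀} × (V ∖ M) ∪ (A ∖ {a₀}) × M ∪ {b₀} × (V ∖ N[M])` is a minimal
dominating set of `K_{r,s} □ X` (each of its vertices has a private neighbour), of size
`2|V| + (r - 2)|M| - |N[M]|`. If the product were well-dominated, comparing `D(∅)` with `D({v})`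
would force `|N[v]| = r - 2` for every `v`; then for non-adjacent `u, v` with a common neighbour,
`|N[{u, v}]| < |N[u]| + |N[v]|` makes `D({u, v})` too large. Hence the connected graph `X` is
complete and `|V| = r - 2`, and for any vertex `u` the minimal dominating set `K_{r,s} × {u}`,
of size `r + s > 2|V|`, gives the contradiction.
-/

open SimpleGraph

/-- `S` dominates `G`: every vertex is in `S` or adjacent to a vertex of `S`. -/
def Dominates {V : Type*} (G : SimpleGraph V) (S : Set V) : Prop :=
  ∀ v : V, v ∈ S ∨ ∃ u ∈ S, G.Adj u v

/-- `S` is a minimal dominating set of `G`. -/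
def MinDom {V : Type*} (G : SimpleGraph V) (S : Set V) : Prop :=
  Dominates G S ∧ ∀ T : Set V, T ⊂ S → ¬ Dominates G T

/-- `G` is well-dominated: all minimal dominating sets have the same cardinality. -/
def WellDom {V : Type*} (G : SimpleGraph V) : Prop :=
  ∀ S T : Set V, MinDom G S → MinDom G T → S.ncard = T.ncard

/-- `I` is an independent set of `G`. -/
def IndepSet {V : Type*} (G : SimpleGraph V) (I : Set V) : Prop :=
  ∀ a ∈ I, ∀ b ∈ I, ¬ G.Adj a b

/-- `I` is a maximal independent set of `G`. -/
def MaxIndep {V : Type*} (G : SimpleGraph V) (I : Set V) : Prop :=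
  IndepSet G I ∧ ∀ J : Set V, IndepSet G J → I ⊆ J → J = I

/-- The closed neighborhood `N[S]` of a set of vertices. -/
def closedNbhd {V : Type*} (G : SimpleGraph V) (S : Set V) : Set V :=
  {v | v ∈ S ∨ ∃ u ∈ S, G.Adj u v}


lemma minDom_of_forall_exists_private {V : Type*} {G : SimpleGraph V} {S : Set V}
    (hdom : Dominates G S) (hpriv : ∀ d ∈ S, ∃ w, ∀ u ∈ S, (u = w ∨ G.Adj u w) → u = d) :
    MinDom G S := by
  refine ⟨hdom, fun T hTS hT => ?_⟩
  obtain ⟨d, hdS, hdT⟩ := Set.exists_of_ssubset hTS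
  obtain ⟨w, hw⟩ := hpriv d hdS
  rcases hT w with hwT | ⟨u, huT, huw⟩
  · exact hdT (hw w (hTS.1 hwT) (.inl rfl) ▸ hwT)
  · exact hdT (hw u (hTS.1 huT) (.inr huw) ▸ huT)

lemma closedNbhd_empty {V : Type*} (X : SimpleGraph V) : closedNbhd X ∅ = ∅ := by
  simp [closedNbhd]

lemma closedNbhd_union {V : Type*} (X : SimpleGraph V) (S T : Set V) :
    closedNbhd X (S ∪ T) = closedNbhd X S ∪ closedNbhd X T := by
  ext v
  simp only [closedNbhd, Set.mem_union, Set.mem_ofPred_eq]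
  grind

lemma SimpleGraph.Connected.adj_of_ne_of_forall_adj_of_adj {V : Type*} {X : SimpleGraph V}
    (hconn : X.Connected) (h : ∀ u v w, X.Adj w u → X.Adj w v → u ≠ v → X.Adj u v)
    {u v : V} (huv : u ≠ v) : X.Adj u v := by
  by_contra hnadj
  obtain ⟨p, hp⟩ := hconn.exists_walk_length_eq_dist u v
  have hdist : 1 < X.dist u v := by
    have h0 : X.dist u v ≠ 0 := by simpa [hconn.dist_eq_zero_iff] using huv
    have h1 : X.dist u v ≠ 1 := by rwa [Ne, SimpleGraph.dist_eq_one_iff_adj]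
    omega
  obtain ⟨x, a, b, hxa, hab, hxb, hne⟩ := p.exists_adj_adj_not_adj_ne hp hdist
  exact hxb (h x b a hxa.symm hab hne)

lemma indepSet_pair {V : Type*} {X : SimpleGraph V} {u v : V} (h : ¬ X.Adj u v) :
    IndepSet X {u, v} := by
  rintro a (rfl | rfl) b (rfl | rfl) <;> simp_all [adj_comm]

lemma minDom_univ_prod_singleton {V W : Type*} (K : SimpleGraph W) {X : SimpleGraph V}
    [Nontrivial V] {u : V} (hu : ∀ x, x ≠ u → X.Adj u x) : MinDom (K □ X) (Set.univ ×ˢ {u}) := by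
  obtain ⟨t, htu⟩ := exists_ne u
  apply minDom_of_forall_exists_private
  · rintro ⟨c, x⟩
    by_cases hx : x = u
    · simp [hx]
    · exact .inr ⟨(c, u), by simp, by simp [hu x hx]⟩
  · rintro ⟨c, _⟩ ⟨-, rfl⟩
    refine ⟨(c, t), ?_⟩
    rintro ⟨c', _⟩ ⟨-, rfl⟩ (h | hadj)
    · exact (htu (congrArg Prod.snd h).symm).elim
    · rcases boxProd_adj.1 hadj with ⟨-, h⟩ | ⟨-, rfl⟩
      · exact (htu h.symm).elim
      · rfl

section CompleteBipartiteBox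

variable {α β V : Type*} (X : SimpleGraph V)

def bipartiteBoxDomSet (a₀ : α) (b₀ : β) (M : Set V) : Set ((α ⊕ β) × V) :=
  {Sum.inl a₀} ×ˢ Mᶜ ∪ (Sum.inl '' {a₀}ᶜ) ×ˢ M ∪ {Sum.inr b₀} ×ˢ (closedNbhd X M)ᶜ

variable {X} {a₀ : α} {b₀ : β} {M : Set V}

@[simp]
lemma inl_mem_bipartiteBoxDomSet {a : α} {x : V} :
    (Sum.inl a, x) ∈ bipartiteBoxDomSet X a₀ b₀ M ↔ (a = a₀ ∧ x ∉ M ∨ a ≠ a₀ ∧ x ∈ M) := by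
  simp [bipartiteBoxDomSet]

@[simp]
lemma inr_mem_bipartiteBoxDomSet {b : β} {x : V} :
    (Sum.inr b, x) ∈ bipartiteBoxDomSet X a₀ b₀ M ↔ (b = b₀ ∧ x ∉ closedNbhd X M) := by
  simp [bipartiteBoxDomSet]

lemma minDom_bipartiteBoxDomSet [Nontrivial α] [Nontrivial β] (hM : IndepSet X M)
    (hX : ∀ v, ∃ w, X.Adj v w) :
    MinDom (completeBipartiteGraph α β □ X) (bipartiteBoxDomSet X a₀ b₀ M) := by
  obtain ⟨a₁, ha₁⟩ := exists_ne a₀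
  obtain ⟨b₁, hb₁⟩ := exists_ne b₀
  apply minDom_of_forall_exists_private
  · rintro ⟨a | b, x⟩
    · by_cases ha : a = a₀ <;> by_cases hx : x ∈ M
      · obtain ⟨y, hxy⟩ := hX x
        exact .inr ⟨(.inl a, y), by simpa [ha] using fun hy => hM x hx y hy hxy,
          by simp [hxy.symm]⟩
      · simp [ha, hx]
      · simp [ha, hx]
      · by_cases hxN : x ∈ closedNbhd X M
        · obtain ⟨m, hm, hmx⟩ := hxN.resolve_left hx
          exact .inr ⟨(.inl a, m), by simp [ha, hm], by simp [hmx]⟩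
        · exact .inr ⟨(.inr b₀, x), by simp [hxN], by simp⟩
    · by_cases hx : x ∈ M
      · exact .inr ⟨(.inl a₁, x), by simp [ha₁, hx], by simp⟩
      · exact .inr ⟨(.inl a₀, x), by simp [hx], by simp⟩
  · rintro ⟨a | b, x⟩ hd
    · rcases (inl_mem_bipartiteBoxDomSet).1 hd with ⟨rfl, hx⟩ | ⟨ha, hx⟩
      · refine ⟨(.inr b₁, x), ?_⟩
        rintro ⟨a' | b', y⟩ hu (h | hadj) <;> simp_all
      · refine ⟨(.inl a, x), ?_⟩
        rintro ⟨a' | b', y⟩ hu (h | hadj)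
        · exact h
        · obtain ⟨hyx, rfl⟩ : X.Adj y x ∧ a' = a := by simpa using hadj
          exact (hM y (by simpa [ha] using hu) x hx hyx).elim
        · exact h
        · obtain rfl : y = x := by simpa using hadj
          exact ((inr_mem_bipartiteBoxDomSet.1 hu).2 (.inl hx)).elim
    · obtain ⟨rfl, hx⟩ := inr_mem_bipartiteBoxDomSet.1 hd
      refine ⟨(.inl a₁, x), ?_⟩
      rintro ⟨a' | b', y⟩ hu (hu' | hadj)
      · obtain ⟨rfl, rfl⟩ : a' = a₁ ∧ y = x := by simpa using hu'
        exact (hx (.inl (by simpa [ha₁] using hu))).elim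
      · obtain ⟨hyx, rfl⟩ : X.Adj y x ∧ a' = a₁ := by simpa using hadj
        exact (hx (.inr ⟨y, by simpa [ha₁] using hu, hyx⟩)).elim
      · simp at hu'
      · obtain rfl : y = x := by simpa using hadj
        simp_all

lemma ncard_bipartiteBoxDomSet_add [Finite α] [Finite V] :
    (bipartiteBoxDomSet X a₀ b₀ M).ncard + M.ncard + (closedNbhd X M).ncard =
      2 * Nat.card V + (Nat.card α - 1) * M.ncard := by
  have hA : Disjoint ({Sum.inl a₀} ×ˢ Mᶜ) ((Sum.inl '' {a₀}ᶜ : Set (α ⊕ β)) ×ˢ M) :=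
    Set.disjoint_prod.2 (.inr disjoint_compl_left)
  have hB : Disjoint ({Sum.inl a₀} ×ˢ Mᶜ ∪ (Sum.inl '' {a₀}ᶜ : Set (α ⊕ β)) ×ˢ M)
      ({Sum.inr b₀} ×ˢ (closedNbhd X M)ᶜ) := by
    refine Set.disjoint_union_left.2
      ⟨Set.disjoint_prod.2 (.inl ?_), Set.disjoint_prod.2 (.inl ?_)⟩ <;> simp
  rw [bipartiteBoxDomSet, Set.ncard_union_eq hB, Set.ncard_union_eq hA]
  simp only [Set.ncard_prod, Set.ncard_singleton, one_mul,
    Set.ncard_image_of_injective _ Sum.inl_injective]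
  rw [Set.ncard_compl {a₀}, Set.ncard_singleton]
  have := Set.ncard_add_ncard_compl M
  have := Set.ncard_add_ncard_compl (closedNbhd X M)
  omega

section WellDom

variable [Finite α] [Finite V] [Nontrivial α] [Nontrivial β]
  (hWD : WellDom (completeBipartiteGraph α β □ X)) (hX : ∀ v, ∃ w, X.Adj v w)
include hWD hX

lemma WellDom.ncard_eq_of_minDom {S : Set ((α ⊕ β) × V)}
    (hS : MinDom (completeBipartiteGraph α β □ X) S) : S.ncard = 2 * Nat.card V := by
  obtain ⟨a₀⟩ : Nonempty α := inferInstance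
  obtain ⟨b₀⟩ : Nonempty β := inferInstance
  have h := ncard_bipartiteBoxDomSet_add (X := X) (a₀ := a₀) (b₀ := b₀) (M := ∅)
  simp only [closedNbhd_empty, Set.ncard_empty] at h
  rw [hWD _ (bipartiteBoxDomSet X a₀ b₀ ∅) hS
    (minDom_bipartiteBoxDomSet (by simp [IndepSet]) hX)]
  omega

lemma WellDom.ncard_closedNbhd_singleton (v : V) :
    (closedNbhd X {v}).ncard + 2 = Nat.card α := by
  obtain ⟨a₀⟩ : Nonempty α := inferInstance
  obtain ⟨b₀⟩ : Nonempty β := inferInstance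
  have h := ncard_bipartiteBoxDomSet_add (X := X) (a₀ := a₀) (b₀ := b₀) (M := {v})
  rw [hWD.ncard_eq_of_minDom hX (minDom_bipartiteBoxDomSet (by simp [IndepSet]) hX)] at h
  have := Finite.one_lt_card (α := α)
  simp only [Set.ncard_singleton] at h
  omega

lemma WellDom.adj_of_adj_of_adj {u v w : V} (hwu : X.Adj w u) (hwv : X.Adj w v) (huv : u ≠ v) :
    X.Adj u v := by
  by_contra hnadj
  obtain ⟨a₀⟩ : Nonempty α := inferInstance
  obtain ⟨b₀⟩ : Nonempty β := inferInstance
  have h := ncard_bipartiteBoxDomSet_add (X := X) (a₀ := a₀) (b₀ := b₀) (M := {u, v})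
  rw [hWD.ncard_eq_of_minDom hX (minDom_bipartiteBoxDomSet (indepSet_pair hnadj) hX),
    Set.ncard_pair huv, Set.insert_eq, closedNbhd_union] at h
  have hw : w ∈ closedNbhd X {u} ∩ closedNbhd X {v} :=
    ⟨.inr ⟨u, rfl, hwu.symm⟩, .inr ⟨v, rfl, hwv.symm⟩⟩
  have hinter := (Set.ncard_pos (Set.toFinite _)).2 ⟨w, hw⟩
  have hunion := Set.ncard_union_add_ncard_inter (closedNbhd X {u}) (closedNbhd X {v})
  have hu := hWD.ncard_closedNbhd_singleton hX u
  have hv := hWD.ncard_closedNbhd_singleton hX v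
  omega

end WellDom

end CompleteBipartiteBox

theorem stmt9 {V : Type*} [Fintype V] (X : SimpleGraph V)
    (hconn : X.Connected) (hcard : 3 ≤ Fintype.card V)
    (r s : ℕ) (hr : 2 ≤ r) (hrs : r ≤ s) :
    ¬ WellDom (completeBipartiteGraph (Fin r) (Fin s) □ X) := by
  intro hWD
  have : Nontrivial V := Fintype.one_lt_card_iff_nontrivial.1 (by omega)
  have : Nontrivial (Fin r) := Fin.nontrivial_iff_two_le.2 hr
  have : Nontrivial (Fin s) := Fin.nontrivial_iff_two_le.2 (hr.trans hrs)
  have hX := hconn.preconnected.exists_adj_of_nontrivial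
  have hcomplete : ∀ u v : V, u ≠ v → X.Adj u v := fun u v huv =>
    hconn.adj_of_ne_of_forall_adj_of_adj (fun _ _ _ => hWD.adj_of_adj_of_adj hX) huv
  obtain ⟨v⟩ : Nonempty V := inferInstance
  have hNv : closedNbhd X {v} = Set.univ := Set.eq_univ_of_forall fun x =>
    (eq_or_ne x v).imp id fun hx => ⟨v, rfl, hcomplete v x hx.symm⟩
  have hrV := hWD.ncard_closedNbhd_singleton hX v
  have hfiber := hWD.ncard_eq_of_minDom hX <|
    minDom_univ_prod_singleton (completeBipartiteGraph (Fin r) (Fin s)) fun x hx =>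
      hcomplete v x hx.symm
  simp only [hNv, Set.ncard_univ, Set.ncard_prod, Set.ncard_singleton, Nat.card_eq_fintype_card,
    Fintype.card_sum, Fintype.card_fin] at hrV hfiber
  omega
end

section
/- Let X be a connected graph of order at least 3 and let s ≥ 3. Then the Cartesian product K_{1,s} □ X (the star with s leaves times X) is not well-dominated. -/
open SimpleGraph

/-!
Write `G = K_{1,s} □ X` and `n = |V(X)|`. The centre fibre is a minimal dominating set of
size `n`, so if `G` were well-dominated every minimal dominating set would have size `n`.

A vertex `v` of degree `> s` gives a dominating set of size `< n`. Otherwise, for a maximal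
independent set `J` of `X` and a maximal independent set `K` of `X - J`, putting `J` on the
centre and `K` on the leaves (or the other way round) gives maximal independent sets of `G`, of
sizes `|J| + s|K|` and `|K| + s|J|`; hence `(s + 1)|J| = n`. As all degrees are `≤ s`, the closed
neighbourhoods of the vertices of `J` must then partition `V`, and exchanging a vertex of `J` for
one of its neighbours shows that adjacent vertices have the same closed neighbourhood. Being
connected, `X` is complete, and in `K_{1,s} □ K_n` a leaf fibre with one vertex moved to the
other leaves is a minimal dominating set of size `n + s - 2 > n`.
-/

section Domination

variable {V : Type*} {G : SimpleGraph V}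

lemma mem_closedNbhd_singleton {u v : V} : v ∈ closedNbhd G {u} ↔ v = u ∨ G.Adj u v := by
  simp [closedNbhd]

lemma ncard_closedNbhd_singleton [Finite V] (u : V) :
    (closedNbhd G {u}).ncard = (G.neighborSet u).ncard + 1 := by
  have : closedNbhd G {u} = insert u (G.neighborSet u) := by
    ext v; simp [mem_closedNbhd_singleton]
  rw [this, Set.ncard_insert_of_notMem (by simp)]

lemma Dominates.exists_mem_closedNbhd {S : Set V} (hS : Dominates G S) (v : V) :
    ∃ u ∈ S, v ∈ closedNbhd G {u} := by
  rcases hS v with hv | ⟨u, hu, huv⟩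
  · exact ⟨v, hv, mem_closedNbhd_singleton.2 (Or.inl rfl)⟩
  · exact ⟨u, hu, mem_closedNbhd_singleton.2 (Or.inr huv)⟩

lemma Dominates.exists_minDom_subset [Finite V] {S : Set V} (hS : Dominates G S) :
    ∃ T ⊆ S, MinDom G T := by
  obtain ⟨T, hTS, hT⟩ := Finite.exists_le_minimal hS
  exact ⟨T, hTS, hT.1, fun U hUT hU => hUT.2 (hT.2 hU hUT.1)⟩

lemma minDom_of_forall_exists_private_s10 {S : Set V} (hS : Dominates G S)
    (hpriv : ∀ x ∈ S, ∃ y, ∀ u ∈ S, y ∈ closedNbhd G {u} → u = x) : MinDom G S := by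
  refine ⟨hS, fun T hTS hT => ?_⟩
  obtain ⟨x, hxS, hxT⟩ := Set.exists_of_ssubset hTS
  obtain ⟨y, hy⟩ := hpriv x hxS
  obtain ⟨u, huT, hyu⟩ := hT.exists_mem_closedNbhd y
  exact hxT (hy u (hTS.subset huT) hyu ▸ huT)

lemma IndepSet.insert {I : Set V} {v : V} (hI : IndepSet G I)
    (hv : ∀ u ∈ I, ¬ G.Adj u v) : IndepSet G (insert v I) := by
  rintro a (rfl | ha) b (rfl | hb) hab
  · exact G.irrefl hab
  · exact hv b hb hab.symm
  · exact hv a ha hab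
  · exact hI a ha b hb hab

lemma maxIndep_iff {I : Set V} : MaxIndep G I ↔ IndepSet G I ∧ Dominates G I := by
  refine ⟨fun ⟨hI, hmax⟩ => ⟨hI, fun v => ?_⟩,
    fun ⟨hI, hdom⟩ => ⟨hI, fun J hJ hIJ => ?_⟩⟩
  · by_contra! h
    exact h.1 (hmax _ (hI.insert h.2) (Set.subset_insert v I) ▸ Set.mem_insert v I)
  · refine Set.Subset.antisymm (fun v hvJ => ?_) hIJ
    by_contra hvI
    obtain ⟨u, huI, huv⟩ := (hdom v).resolve_left hvI
    exact hJ u (hIJ huI) v hvJ huv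

lemma MaxIndep.dominates {I : Set V} (hI : MaxIndep G I) : Dominates G I :=
  (maxIndep_iff.1 hI).2

lemma MaxIndep.minDom {I : Set V} (hI : MaxIndep G I) : MinDom G I :=
  minDom_of_forall_exists_private_s10 hI.dominates fun x _ =>
    ⟨x, fun u hu hxu => (mem_closedNbhd_singleton.1 hxu).elim Eq.symm
      fun hux => absurd hux (hI.1 u hu x ‹_›)⟩

lemma IndepSet.exists_maxIndep_superset [Finite V] {I : Set V} (hI : IndepSet G I) :
    ∃ J, I ⊆ J ∧ MaxIndep G J := by
  obtain ⟨J, hIJ, hJ⟩ := Finite.exists_le_maximal hI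
  exact ⟨J, hIJ, hJ.1, fun K hK hJK => (hJ.2 hK hJK).antisymm hJK⟩

lemma exists_indepSet_dominating_within [Finite V] (A : Set V) :
    ∃ K ⊆ A, IndepSet G K ∧ ∀ v ∈ A, v ∉ K → ∃ u ∈ K, G.Adj u v := by
  obtain ⟨K, -, hK⟩ := Finite.exists_le_maximal (p := fun K => K ⊆ A ∧ IndepSet G K)
    (a := ∅) ⟨Set.empty_subset A, fun _ h => h.elim⟩
  refine ⟨K, hK.1.1, hK.1.2, fun v hvA hvK => ?_⟩
  by_contra! h
  exact hvK (hK.2 ⟨Set.insert_subset hvA hK.1.1, hK.1.2.insert h⟩ (Set.subset_insert v K)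
    (Set.mem_insert v K))

end Domination

section WellCovered

variable {V : Type*} {G : SimpleGraph V}

def WellCovered (G : SimpleGraph V) : Prop :=
  ∀ I J : Set V, MaxIndep G I → MaxIndep G J → I.ncard = J.ncard

/-- Pigeonhole: `|S|` closed neighbourhoods of size `≤ d + 1` can only cover
`(d + 1) * |S|` vertices if they do not overlap. -/
lemma Dominates.pairwiseDisjoint_closedNbhd [Fintype V] {S : Set V} {d : ℕ}
    (hS : Dominates G S) (hdeg : ∀ v, (G.neighborSet v).ncard ≤ d)
    (hcard : (d + 1) * S.ncard ≤ Fintype.card V) :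
    S.PairwiseDisjoint fun u => closedNbhd G {u} := by
  classical
  intro x hx z hz hxz
  by_contra hmeet
  obtain ⟨a, hax, haz⟩ := Set.not_disjoint_iff.1 hmeet
  let N : V → Finset V := fun u => (closedNbhd G {u}).toFinset
  have hN : ∀ u, (N u).card ≤ d + 1 := fun u => by
    rw [← Set.ncard_eq_toFinset_card', ncard_closedNbhd_singleton]
    exact Nat.succ_le_succ (hdeg u)
  have hcover : Finset.univ ⊆ (S.toFinset.erase x).biUnion N ∪ (N x).erase a := by
    intro v _
    obtain ⟨u, huS, hvu⟩ := hS.exists_mem_closedNbhd v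
    by_cases hux : u = x
    · subst hux
      by_cases hva : v = a
      · subst hva
        exact Finset.mem_union_left _
          (Finset.mem_biUnion.2 ⟨z, by simp [hz, Ne.symm hxz], by simpa [N] using haz⟩)
      · exact Finset.mem_union_right _ (by simp [N, hva, hvu])
    · exact Finset.mem_union_left _
        (Finset.mem_biUnion.2 ⟨u, by simp [huS, hux], by simpa [N] using hvu⟩)
  have hx1 : (S.toFinset.erase x).card + 1 = S.ncard := by
    rw [Finset.card_erase_add_one (by simpa using hx), Set.ncard_eq_toFinset_card']
  have hNx : ((N x).erase a).card + 1 ≤ d + 1 := by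
    rw [Finset.card_erase_add_one (by simpa [N] using hax)]
    exact hN x
  have hle : Fintype.card V ≤ (S.toFinset.erase x).card * (d + 1) + d := calc
    Fintype.card V ≤ ((S.toFinset.erase x).biUnion N ∪ (N x).erase a).card :=
      Finset.card_le_card hcover
    _ ≤ ((S.toFinset.erase x).biUnion N).card + ((N x).erase a).card := Finset.card_union_le _ _
    _ ≤ (S.toFinset.erase x).card * (d + 1) + d := by
      gcongr
      · exact Finset.card_biUnion_le_card_mul _ _ _ fun u _ => hN u
      · omega
  rw [← hx1] at hcard
  have hexpand : (d + 1) * ((S.toFinset.erase x).card + 1) =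
      (S.toFinset.erase x).card * (d + 1) + d + 1 := by ring
  omega

/-- Exchanging `x` for `y` in a maximal independent set `J ∋ x` gives an independent set of the
same size, hence a maximal one, and it can only dominate `N[x]` through `y`. -/
lemma WellCovered.closedNbhd_subset_of_adj [Finite V] (hwc : WellCovered G)
    (heff : ∀ J, MaxIndep G J → J.PairwiseDisjoint fun u => closedNbhd G {u})
    {x y : V} (hxy : G.Adj x y) : closedNbhd G {x} ⊆ closedNbhd G {y} := by
  obtain ⟨J, hxJ, hJ⟩ := IndepSet.exists_maxIndep_superset (G := G) (I := {x})
    (by rintro a rfl b rfl hab; exact G.irrefl hab)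
  have hfar : ∀ z ∈ J \ {x}, ∀ v ∈ closedNbhd G {x}, v ∉ closedNbhd G {z} :=
    fun z hz v hvx hvz => Set.disjoint_left.1 (heff J hJ (hxJ rfl) hz.1 (Ne.symm hz.2)) hvx hvz
  have hy : y ∈ closedNbhd G {x} := mem_closedNbhd_singleton.2 (Or.inr hxy)
  have hyJ : y ∉ J \ {x} := fun h => hfar y h y hy (mem_closedNbhd_singleton.2 (Or.inl rfl))
  have hM : IndepSet G (insert y (J \ {x})) :=
    IndepSet.insert (fun a ha b hb => hJ.1 a ha.1 b hb.1)
      fun u hu huy => hfar u hu y hy (mem_closedNbhd_singleton.2 (Or.inr huy))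
  have hMcard : (insert y (J \ {x})).ncard = J.ncard := by
    rw [Set.ncard_insert_of_notMem hyJ, Set.ncard_sdiff_singleton_add_one (hxJ rfl)]
  obtain ⟨M, hyM, hM⟩ := hM.exists_maxIndep_superset
  have hMeq : insert y (J \ {x}) = M :=
    Set.eq_of_subset_of_ncard_le hyM (hMcard ▸ (hwc M J hM hJ).le)
  intro v hv
  obtain ⟨u, huM, hvu⟩ := hM.dominates.exists_mem_closedNbhd v
  rcases hMeq ▸ huM with rfl | hu
  · exact hvu
  · exact absurd hvu (hfar u hu v hv)

end WellCovered

lemma SimpleGraph.Connected.adj_of_closedNbhd_subset {V : Type*} {G : SimpleGraph V}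
    (hconn : G.Connected)
    (h : ∀ x y, G.Adj x y → closedNbhd G {x} ⊆ closedNbhd G {y}) {x y : V} (hxy : x ≠ y) :
    G.Adj x y := by
  have hwalk : ∀ {a b : V}, G.Walk a b → closedNbhd G {a} ⊆ closedNbhd G {b} := by
    intro a b p
    induction p with
    | nil => exact subset_rfl
    | cons hadj _ ih => exact (h _ _ hadj).trans ih
  obtain ⟨p⟩ := hconn.preconnected y x
  have hy : y ∈ closedNbhd G {x} := hwalk p (mem_closedNbhd_singleton.2 (Or.inl rfl))
  exact (mem_closedNbhd_singleton.1 hy).resolve_left hxy.symm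

section StarProduct

variable {V : Type*} {s : ℕ} {X : SimpleGraph V}

/-- The vertex set of `K_{1,s} □ X` that is `A` in the fibre of the centre `Sum.inl 0` and `B` in
the fibre of every leaf `Sum.inr i`. -/
def starLayer (s : ℕ) (A B : Set V) : Set ((Fin 1 ⊕ Fin s) × V) :=
  {Sum.inl 0} ×ˢ A ∪ Set.range Sum.inr ×ˢ B

@[simp]
lemma mem_starLayer_inl {A B : Set V} {c : Fin 1} {v : V} :
    (Sum.inl c, v) ∈ starLayer s A B ↔ v ∈ A := by
  simp [starLayer, Subsingleton.elim c 0]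

@[simp]
lemma mem_starLayer_inr {A B : Set V} {i : Fin s} {v : V} :
    (Sum.inr i, v) ∈ starLayer s A B ↔ v ∈ B := by
  simp [starLayer]

lemma ncard_starLayer [Finite V] (A B : Set V) :
    (starLayer s A B).ncard = A.ncard + s * B.ncard := by
  have hdisj : Disjoint ({Sum.inl 0} ×ˢ A) (Set.range Sum.inr ×ˢ B :
      Set ((Fin 1 ⊕ Fin s) × V)) := by
    rw [Set.disjoint_left]
    rintro ⟨_, _⟩ ⟨rfl, _⟩ ⟨⟨_, h⟩, _⟩
    cases h
  rw [starLayer, Set.ncard_union_eq hdisj, Set.ncard_prod, Set.ncard_prod, Set.ncard_singleton,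
    ← Nat.card_coe_set_eq (Set.range _), Nat.card_range_of_injective Sum.inr_injective]
  simp

lemma minDom_starLayer_univ_empty (hs : 0 < s) :
    MinDom (completeBipartiteGraph (Fin 1) (Fin s) □ X) (starLayer s Set.univ ∅) := by
  refine minDom_of_forall_exists_private_s10 ?_ ?_
  · rintro ⟨_ | i, v⟩
    · exact Or.inl (by simp)
    · exact Or.inr ⟨(Sum.inl 0, v), by simp, by simp [boxProd_adj]⟩
  · rintro ⟨_ | _, v⟩ hx
    · refine ⟨(Sum.inr ⟨0, hs⟩, v), ?_⟩
      rintro ⟨_ | _, w⟩ hu hvu <;>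
        simp_all [mem_closedNbhd_singleton, boxProd_adj, Fin.fin_one_eq_zero]
    · simp at hx

lemma WellDom.ncard_eq_card [Fintype V]
    (hwd : WellDom (completeBipartiteGraph (Fin 1) (Fin s) □ X)) (hs : 0 < s)
    {T : Set ((Fin 1 ⊕ Fin s) × V)}
    (hT : MinDom (completeBipartiteGraph (Fin 1) (Fin s) □ X) T) : T.ncard = Fintype.card V := by
  rw [hwd T _ hT (minDom_starLayer_univ_empty hs), ncard_starLayer]
  simp [Set.ncard_univ]

lemma dominates_prod_singleton_union_starLayer (v : V) :
    Dominates (completeBipartiteGraph (Fin 1) (Fin s) □ X)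
      (Set.univ ×ˢ {v} ∪ starLayer s (closedNbhd X {v})ᶜ ∅) := by
  rintro ⟨a, w⟩
  by_cases hw : w ∈ closedNbhd X {v}
  · rcases mem_closedNbhd_singleton.1 hw with rfl | hvw
    · exact Or.inl (Or.inl ⟨Set.mem_univ _, rfl⟩)
    · exact Or.inr ⟨(a, v), Or.inl ⟨Set.mem_univ _, rfl⟩, by simp [boxProd_adj, hvw]⟩
  · rcases a with c | i
    · exact Or.inl (Or.inr (by simpa using hw))
    · exact Or.inr ⟨(Sum.inl 0, w), Or.inr (by simpa using hw), by simp [boxProd_adj]⟩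

lemma not_wellDom_of_lt_ncard_neighborSet [Fintype V] (hs : 0 < s) {v : V}
    (hv : s < (X.neighborSet v).ncard) :
    ¬ WellDom (completeBipartiteGraph (Fin 1) (Fin s) □ X) := by
  intro hwd
  obtain ⟨T, hT, hTmin⟩ :=
    (dominates_prod_singleton_union_starLayer (s := s) (X := X) v).exists_minDom_subset
  have hN := Set.ncard_add_ncard_compl (closedNbhd X {v})
  rw [ncard_closedNbhd_singleton, Nat.card_eq_fintype_card] at hN
  have hsmall : T.ncard < Fintype.card V := calc
    T.ncard ≤ (Set.univ ×ˢ {v} ∪ starLayer s (closedNbhd X {v})ᶜ ∅).ncard :=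
      Set.ncard_le_ncard hT
    _ ≤ (s + 1) + (closedNbhd X {v})ᶜ.ncard := by
      refine (Set.ncard_union_le _ _).trans ?_
      rw [Set.ncard_prod, ncard_starLayer, Set.ncard_univ, Set.ncard_singleton]
      simp [add_comm]
    _ < Fintype.card V := by omega
  exact hsmall.ne (hwd.ncard_eq_card hs hTmin)

lemma maxIndep_starLayer (hs : 0 < s) {A B : Set V} (hA : IndepSet X A) (hB : IndepSet X B)
    (hAB : Disjoint A B)
    (hcov : ∀ v, v ∉ A → v ∉ B → (∃ u ∈ A, X.Adj u v) ∧ ∃ u ∈ B, X.Adj u v) :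
    MaxIndep (completeBipartiteGraph (Fin 1) (Fin s) □ X) (starLayer s A B) := by
  refine maxIndep_iff.2 ⟨?_, ?_⟩
  · rintro ⟨_ | _, v⟩ hv ⟨_ | _, w⟩ hw hvw <;>
      simp only [mem_starLayer_inl, mem_starLayer_inr] at hv hw
    · exact hA v hv w hw (by simpa [boxProd_adj, Fin.fin_one_eq_zero] using hvw)
    · exact Set.disjoint_left.1 hAB hv (by simp_all [boxProd_adj])
    · exact Set.disjoint_left.1 hAB hw (by simp_all [boxProd_adj])
    · exact hB v hv w hw (by simp_all [boxProd_adj])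
  · rintro ⟨_ | i, v⟩
    · by_cases hvA : v ∈ A
      · exact Or.inl (by simpa using hvA)
      by_cases hvB : v ∈ B
      · exact Or.inr ⟨(Sum.inr ⟨0, hs⟩, v), by simpa using hvB, by simp [boxProd_adj]⟩
      obtain ⟨u, hu, huv⟩ := (hcov v hvA hvB).1
      exact Or.inr ⟨(Sum.inl 0, u), by simpa using hu,
        by simp [boxProd_adj, huv, Fin.fin_one_eq_zero]⟩
    · by_cases hvB : v ∈ B
      · exact Or.inl (by simpa using hvB)
      by_cases hvA : v ∈ A
      · exact Or.inr ⟨(Sum.inl 0, v), by simpa using hvA, by simp [boxProd_adj]⟩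
      obtain ⟨u, hu, huv⟩ := (hcov v hvA hvB).2
      exact Or.inr ⟨(Sum.inr i, u), by simpa using hu, by simp [boxProd_adj, huv]⟩

lemma WellDom.succ_mul_ncard_eq_card [Fintype V]
    (hwd : WellDom (completeBipartiteGraph (Fin 1) (Fin s) □ X)) (hs : 2 ≤ s) {J : Set V}
    (hJ : MaxIndep X J) : (s + 1) * J.ncard = Fintype.card V := by
  obtain ⟨K, hKsub, hK, hKdom⟩ := exists_indepSet_dominating_within (G := X) Jᶜ
  have hcov : ∀ v, v ∉ J → v ∉ K → (∃ u ∈ J, X.Adj u v) ∧ ∃ u ∈ K, X.Adj u v :=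
    fun v hvJ hvK => ⟨(hJ.dominates v).resolve_left hvJ, hKdom v hvJ hvK⟩
  have hdisj : Disjoint J K := Set.subset_compl_iff_disjoint_left.1 hKsub
  have hJK := hwd.ncard_eq_card (by omega)
    (maxIndep_starLayer (s := s) (by omega) hJ.1 hK hdisj hcov).minDom
  have hKJ := hwd.ncard_eq_card (by omega)
    (maxIndep_starLayer (s := s) (by omega) hK hJ.1 hdisj.symm
      fun v hvK hvJ => (hcov v hvJ hvK).symm).minDom
  rw [ncard_starLayer] at hJK hKJ
  have heq : J.ncard = K.ncard := by
    rcases lt_trichotomy J.ncard K.ncard with h | h | h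
    · nlinarith
    · exact h
    · nlinarith
  rw [← hJK, heq]
  ring

end StarProduct

section CompleteFactor

variable {V : Type*} {s : ℕ} {X : SimpleGraph V}

/-- The fibre of the leaf `i` with its vertex over `v` replaced by the copies of `v` in all other
leaves. -/
def exchangedLeafFibre (i : Fin s) (v : V) : Set ((Fin 1 ⊕ Fin s) × V) :=
  {Sum.inr i} ×ˢ {v}ᶜ ∪ (Set.range Sum.inr \ {Sum.inr i}) ×ˢ {v}

lemma ncard_exchangedLeafFibre [Fintype V] (i : Fin s) (v : V) :
    (exchangedLeafFibre i v).ncard = (Fintype.card V - 1) + (s - 1) := by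
  have hdisj : Disjoint ({Sum.inr i} ×ˢ {v}ᶜ)
      ((Set.range Sum.inr \ {Sum.inr i}) ×ˢ {v} : Set ((Fin 1 ⊕ Fin s) × V)) := by
    rw [Set.disjoint_left]
    rintro ⟨_, _⟩ ⟨_, hw⟩ ⟨_, hw'⟩
    exact hw hw'
  rw [exchangedLeafFibre, Set.ncard_union_eq hdisj, Set.ncard_prod, Set.ncard_prod,
    Set.ncard_sdiff_singleton_of_mem (Set.mem_range_self i), ← Nat.card_coe_set_eq (Set.range _),
    Nat.card_range_of_injective Sum.inr_injective, Set.ncard_compl]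
  simp

lemma minDom_exchangedLeafFibre [Nontrivial V] (hs : 1 < s)
    (hX : ∀ x y, x ≠ y → X.Adj x y) (i : Fin s) (v : V) :
    MinDom (completeBipartiteGraph (Fin 1) (Fin s) □ X) (exchangedLeafFibre i v) := by
  have := Fin.nontrivial_iff_two_le.2 hs
  obtain ⟨j, hji⟩ := exists_ne i
  obtain ⟨w, hwv⟩ := exists_ne v
  refine minDom_of_forall_exists_private_s10 ?_ ?_
  · rintro ⟨_ | k, u⟩
    · by_cases huv : u = v
      · exact Or.inr ⟨(Sum.inr j, v), by simp [exchangedLeafFibre, hji],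
          by simp [boxProd_adj, huv]⟩
      · exact Or.inr ⟨(Sum.inr i, u), by simp [exchangedLeafFibre, huv], by simp [boxProd_adj]⟩
    · by_cases hu : (Sum.inr k, u) ∈ exchangedLeafFibre i v
      · exact Or.inl hu
      by_cases hki : k = i
      · subst hki
        have huv : u = v := by simpa [exchangedLeafFibre] using hu
        exact Or.inr ⟨(Sum.inr k, w), by simp [exchangedLeafFibre, hwv],
          by simp [boxProd_adj, hX w u (huv ▸ hwv)]⟩
      · have huv : u ≠ v := by simpa [exchangedLeafFibre, hki] using hu
        exact Or.inr ⟨(Sum.inr k, v), by simp [exchangedLeafFibre, hki],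
          by simp [boxProd_adj, hX v u (Ne.symm huv)]⟩
  · rintro ⟨_ | k, u⟩ hx
    · simp [exchangedLeafFibre] at hx
    by_cases hki : k = i
    · refine ⟨(Sum.inl 0, u), ?_⟩
      rintro ⟨_ | _, _⟩ hy hxy <;>
        simp_all [exchangedLeafFibre, mem_closedNbhd_singleton, boxProd_adj]
    · refine ⟨(Sum.inr k, u), ?_⟩
      have hu : u = v := by simpa [exchangedLeafFibre, hki] using hx
      rintro ⟨_ | l, u'⟩ hy hxy
      · simp [exchangedLeafFibre] at hy
      rcases (by simpa [mem_closedNbhd_singleton, boxProd_adj] using hxy) with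
        ⟨rfl, rfl⟩ | ⟨hadj, rfl⟩
      · rfl
      · have hu' : u' = v := by simpa [exchangedLeafFibre, hki] using hy
        exact absurd hadj (by simp [hu, hu'])

lemma not_wellDom_of_forall_adj [Fintype V] [Nontrivial V] (hs : 3 ≤ s)
    (hX : ∀ x y, x ≠ y → X.Adj x y) :
    ¬ WellDom (completeBipartiteGraph (Fin 1) (Fin s) □ X) := by
  intro hwd
  obtain ⟨v⟩ := ‹Nontrivial V›.to_nonempty
  have hmin := minDom_exchangedLeafFibre (by omega) hX (⟨0, by omega⟩ : Fin s) v
  have hV := Fintype.one_lt_card (α := V)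
  have := hwd.ncard_eq_card (by omega) hmin
  rw [ncard_exchangedLeafFibre] at this
  omega

end CompleteFactor

theorem stmt10 {V : Type*} [Fintype V] (X : SimpleGraph V)
    (hconn : X.Connected) (hcard : 3 ≤ Fintype.card V)
    (s : ℕ) (hs : 3 ≤ s) :
    ¬ WellDom (completeBipartiteGraph (Fin 1) (Fin s) □ X) := by
  intro hwd
  by_cases hdeg : ∃ v, s < (X.neighborSet v).ncard
  · obtain ⟨v, hv⟩ := hdeg
    exact not_wellDom_of_lt_ncard_neighborSet (by omega) hv hwd
  push Not at hdeg
  have hsize : ∀ J, MaxIndep X J → (s + 1) * J.ncard = Fintype.card V :=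
    fun J hJ => hwd.succ_mul_ncard_eq_card (by omega) hJ
  have hwc : WellCovered X := fun I J hI hJ =>
    Nat.eq_of_mul_eq_mul_left (by omega) ((hsize I hI).trans (hsize J hJ).symm)
  have heff : ∀ J, MaxIndep X J → J.PairwiseDisjoint fun u => closedNbhd X {u} :=
    fun J hJ => hJ.dominates.pairwiseDisjoint_closedNbhd hdeg (hsize J hJ).le
  have hcomplete : ∀ x y, x ≠ y → X.Adj x y :=
    fun _ _ => hconn.adj_of_closedNbhd_subset fun _ _ => hwc.closedNbhd_subset_of_adj heff
  have : Nontrivial V := Fintype.one_lt_card_iff_nontrivial.1 (by omega)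
  exact not_wellDom_of_forall_adj hs hcomplete hwd
end
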